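/- Suppose X is invertible, every λ ∈ ℂ with D¹_N(λ) = 0 satisfies Re λ > 0, and for every eigenvalue λ of W = X⁻¹Y one has n_j − λ r_j ≠ 0 for all j = 1,…,N−1. Then I + (1/2)W is invertible and every eigenvalue μ of (I + (1/2)W)⁻¹(I − (1/2)W) satisfies |μ| < 1; that is, the amplification matrix of the Crank–Nicolson compact scheme has spectral radius less than 1, so the scheme is stable. -/

import Mathlib

/-!
The eigenvalues `λ` of `W = X⁻¹ Y` are the roots of `det (Y - λ X)`. Expanding this
tridiagonal determinant along its first row gives a three-term recurrence, which `D¹_N`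
satisfies as well: the sequences of `𝒜_N` with `t_1 ≠ c` are exactly the tilings of
`{1, …, N-1}` by monomers `b` and dimers `ac`, so splitting off the first tile gives the same
recurrence. Hence `det (Y - λ X) = (-1)^(N-1) D¹_N(λ)`, and every eigenvalue of `W` has positive
real part.

The amplification matrix is the Cayley transform of `W / 2`: from `(I - W/2) v = μ (I + W/2) v`
we get `W v = 2 (1 - μ) / (1 + μ) v`, and `Re ((1 - μ) / (1 + μ)) = (1 - |μ|²) / |1 + μ|²`, so a
positive real part forces `|μ| < 1`.
-/

/-- Labels `a`, `b`, `c` for the sequences in the collection `𝒜_N`. -/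
inductive Label where
  | a : Label
  | b : Label
  | c : Label
deriving DecidableEq

instance : Fintype Label :=
  ⟨{Label.a, Label.b, Label.c}, fun x => by cases x <;> simp⟩

/-- Admissibility of a label sequence (with `n = N - 1` labels, index `i` standing
for `j = i + 1`): the last label is not `a` and, for `2 ≤ j ≤ N-1`, `t_j = c` implies
`t_{j-1} = a` while `t_j ∈ {a,b}` implies `t_{j-1} ∈ {b,c}`. -/
def Admissible {n : ℕ} (t : Fin n → Label) : Prop :=
  (∀ h : 0 < n, t ⟨n - 1, by omega⟩ ≠ Label.a) ∧
  ∀ j : ℕ, ∀ h : j + 1 < n,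
    (t ⟨j + 1, h⟩ = Label.c → t ⟨j, by omega⟩ = Label.a) ∧
    (t ⟨j + 1, h⟩ ≠ Label.c → t ⟨j, by omega⟩ ≠ Label.a)

/-- The collection `𝒜_N` (with `n = N - 1` labels per sequence). -/
noncomputable def AdmSet (n : ℕ) : Finset (Fin n → Label) :=
  haveI := Classical.decPred (Admissible (n := n))
  Finset.univ.filter Admissible

/-- The value `v_j(t)`: `A_j` if `t_j = a`, `-B_j` if `t_j = b`, `-C_j` if `t_j = c`. -/
def labelVal {n : ℕ} (A B C : ℕ → ℂ) (t : Fin n → Label) (j : Fin n) : ℂ :=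
  match t j with
  | Label.a => A (j.val + 1)
  | Label.b => -B (j.val + 1)
  | Label.c => -C (j.val + 1)

/-- `D¹_N = Σ_{t ∈ 𝒜_N, t_1 ≠ c} ∏_{j=1}^{N-1} v_j(t)`, with `n = N - 1`. -/
noncomputable def D1 (n : ℕ) (A B C : ℕ → ℂ) : ℂ :=
  haveI : DecidablePred fun t : Fin n → Label => ∀ h : 0 < n, t ⟨0, h⟩ ≠ Label.c :=
    Classical.decPred _
  ∑ t ∈ (AdmSet n).filter (fun t => ∀ h : 0 < n, t ⟨0, h⟩ ≠ Label.c),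
    ∏ j, labelVal A B C t j

/-- The `(N-1)×(N-1)` tridiagonal complex matrix with 1-indexed subdiagonal entries
`sub_{i+1}` (at position `(i+1, i)`), diagonal entries `dia_i` and superdiagonal
entries `sup_i` (at position `(i, i+1)`), built from real data. -/
def triMatC (n : ℕ) (sub dia sup : ℕ → ℝ) : Matrix (Fin n) (Fin n) ℂ :=
  Matrix.of fun i j =>
    if i.val = j.val then (dia (i.val + 1) : ℂ)
    else if i.val + 1 = j.val then (sup (i.val + 1) : ℂ)
    else if j.val + 1 = i.val then (sub (i.val + 1) : ℂ)
    else 0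

/-- `μ` is an eigenvalue of the square complex matrix `M` if `M v = μ v` for some
nonzero vector `v`. -/
def IsEig {n : ℕ} (M : Matrix (Fin n) (Fin n) ℂ) (μ : ℂ) : Prop :=
  ∃ v : Fin n → ℂ, v ≠ 0 ∧ M.mulVec v = μ • v

open Matrix

theorem det_of_tridiagonal_add_two {R : Type*} [CommRing R] (f : ℕ → ℕ → R)
    (hf : ∀ a b, a + 1 < b ∨ b + 1 < a → f a b = 0) (n : ℕ) :
    (of fun i j : Fin (n + 2) => f i j).det =
      f 0 0 * (of fun i j : Fin (n + 1) => f (i + 1) (j + 1)).det -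
        f 0 1 * f 1 0 * (of fun i j : Fin n => f (i + 2) (j + 2)).det := by
  set M := of fun i j : Fin (n + 2) => f i j
  have minor₀ : M.submatrix Fin.succ Fin.succ = of fun i j : Fin (n + 1) => f (i + 1) (j + 1) := by
    ext i j; simp [M]
  have minor₁ : (M.submatrix Fin.succ (Fin.succAbove 1)).det =
      f 1 0 * (of fun i j : Fin n => f (i + 2) (j + 2)).det := by
    have minor₁₀ : (M.submatrix Fin.succ (Fin.succAbove 1)).submatrix Fin.succ Fin.succ =
        of fun i j : Fin n => f (i + 2) (j + 2) := by
      ext i j; simp [M, Fin.val_succ]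
    rw [det_succ_column_zero, Fin.sum_univ_succ, Finset.sum_eq_zero fun i _ => ?_]
    · simp [M, minor₁₀]
    · simp [M, hf (i + 2) 0 (by omega)]
  rw [det_succ_row_zero, Fin.sum_univ_succ, Fin.sum_univ_succ, Finset.sum_eq_zero fun j _ => ?_]
  · simp only [Fin.succAbove_zero, Fin.succ_zero_eq_one, minor₀, minor₁, M, of_apply, Fin.val_zero,
      Fin.val_one, pow_zero, pow_one]
    ring
  · simp [M, hf 0 (j + 2) (by omega)]

def tridiagEntry {R : Type*} [Zero R] (sub dia sup : ℕ → R) (a b : ℕ) : R :=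
  if a = b then dia (a + 1)
  else if a + 1 = b then sup (a + 1)
  else if b + 1 = a then sub (a + 1)
  else 0

section Tridiagonal

variable {R : Type*} [Zero R] (sub dia sup : ℕ → R)

theorem tridiagEntry_eq_zero {a b : ℕ} (h : a + 1 < b ∨ b + 1 < a) :
    tridiagEntry sub dia sup a b = 0 := by
  unfold tridiagEntry
  split_ifs <;> first | rfl | omega

theorem tridiagEntry_add (k a b : ℕ) :
    tridiagEntry sub dia sup (a + k) (b + k) =
      tridiagEntry (fun i => sub (i + k)) (fun i => dia (i + k)) (fun i => sup (i + k)) a b := by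
  unfold tridiagEntry
  split_ifs <;> first | rfl | omega | (congr 1; omega)

end Tridiagonal

theorem admissible_cons_iff {m : ℕ} (y : Label) (u : Fin m → Label) :
    Admissible (Fin.cons y u : Fin (m + 1) → Label) ↔
      Admissible u ∧ (m = 0 → y ≠ .a) ∧ ∀ h : 0 < m, (u ⟨0, h⟩ = .c ↔ y = .a) := by
  cases m with
  | zero => simp [Admissible]
  | succ k =>
    constructor
    · rintro ⟨hlast, hpair⟩
      refine ⟨⟨fun _ => hlast (by omega), fun j hj => hpair (j + 1) (by omega)⟩,
        fun h => absurd h (by omega), fun _ => ?_⟩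
      obtain ⟨hc, hnc⟩ := hpair 0 (by omega)
      exact ⟨hc, fun ha => by_contra fun h => hnc h ha⟩
    · rintro ⟨⟨hlast, hpair⟩, -, hfirst⟩
      refine ⟨fun _ => hlast (by omega), fun j hj => ?_⟩
      cases j with
      | zero =>
        obtain ⟨hc, ha⟩ := hfirst (by omega)
        exact ⟨hc, fun hnc hya => hnc (ha hya)⟩
      | succ j => exact hpair j (by omega)

def IsTiling {n : ℕ} (t : Fin n → Label) : Prop :=
  Admissible t ∧ ∀ h : 0 < n, t ⟨0, h⟩ ≠ .c

section Tiling

variable {m : ℕ}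

theorem isTiling_cons_iff (y : Label) (u : Fin m → Label) :
    IsTiling (Fin.cons y u : Fin (m + 1) → Label) ↔
      y ≠ .c ∧ Admissible u ∧ (m = 0 → y ≠ .a) ∧ ∀ h : 0 < m, (u ⟨0, h⟩ = .c ↔ y = .a) := by
  rw [IsTiling, admissible_cons_iff]
  exact ⟨fun ⟨h, hy⟩ => ⟨hy m.succ_pos, h⟩, fun ⟨hy, h⟩ => ⟨h, fun _ => hy⟩⟩

theorem isTiling_cons_b (u : Fin m → Label) :
    IsTiling (Fin.cons .b u : Fin (m + 1) → Label) ↔ IsTiling u := by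
  rw [isTiling_cons_iff, IsTiling]
  simp

theorem not_isTiling_cons_c (u : Fin m → Label) :
    ¬ IsTiling (Fin.cons .c u : Fin (m + 1) → Label) := by
  simp [isTiling_cons_iff]

theorem not_isTiling_cons_a_of_fin_zero (u : Fin 0 → Label) :
    ¬ IsTiling (Fin.cons .a u : Fin 1 → Label) := by
  simp [isTiling_cons_iff]

theorem isTiling_cons_a_cons (z : Label) (w : Fin m → Label) :
    IsTiling (Fin.cons .a (Fin.cons z w) : Fin (m + 2) → Label) ↔ z = .c ∧ IsTiling w := by
  rw [isTiling_cons_iff, admissible_cons_iff, IsTiling]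
  cases z <;> simp

end Tiling

open Classical in
noncomputable def tilingWeight {n : ℕ} (A B C : ℕ → ℂ) (t : Fin n → Label) : ℂ :=
  if IsTiling t then ∏ j, labelVal A B C t j else 0

theorem D1_eq_sum_tilingWeight (n : ℕ) (A B C : ℕ → ℂ) :
    D1 n A B C = ∑ t : Fin n → Label, tilingWeight A B C t := by
  classical
  unfold D1 AdmSet tilingWeight IsTiling
  rw [Finset.filter_filter, Finset.sum_filter]
  congr 1 with t
  congr

section Weights

variable {m : ℕ} (A B C : ℕ → ℂ)

theorem prod_labelVal_cons (y : Label) (u : Fin m → Label) :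
    ∏ j, labelVal A B C (Fin.cons y u : Fin (m + 1) → Label) j =
      labelVal A B C (Fin.cons y u : Fin (m + 1) → Label) 0 *
        ∏ j, labelVal (fun k => A (k + 1)) (fun k => B (k + 1)) (fun k => C (k + 1)) u j :=
  Fin.prod_univ_succ _

theorem tilingWeight_fin_zero (u : Fin 0 → Label) : tilingWeight A B C u = 1 := by
  simp [tilingWeight, IsTiling, Admissible]

theorem tilingWeight_cons_b (u : Fin m → Label) :
    tilingWeight A B C (Fin.cons .b u : Fin (m + 1) → Label) =
      -B 1 * tilingWeight (fun k => A (k + 1)) (fun k => B (k + 1)) (fun k => C (k + 1)) u := by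
  unfold tilingWeight
  by_cases h : IsTiling u
  · rw [if_pos ((isTiling_cons_b u).2 h), if_pos h, prod_labelVal_cons]
    rfl
  · rw [if_neg (mt (isTiling_cons_b u).1 h), if_neg h, mul_zero]

theorem tilingWeight_cons_c (u : Fin m → Label) :
    tilingWeight A B C (Fin.cons .c u : Fin (m + 1) → Label) = 0 :=
  if_neg (not_isTiling_cons_c u)

theorem tilingWeight_cons_a_of_fin_zero (u : Fin 0 → Label) :
    tilingWeight A B C (Fin.cons .a u : Fin 1 → Label) = 0 :=
  if_neg (not_isTiling_cons_a_of_fin_zero u)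

theorem tilingWeight_cons_a_cons (z : Label) (w : Fin m → Label) :
    tilingWeight A B C (Fin.cons .a (Fin.cons z w) : Fin (m + 2) → Label) =
      if z = .c then
        -(A 1 * C 2) * tilingWeight (fun k => A (k + 2)) (fun k => B (k + 2)) (fun k => C (k + 2)) w
      else 0 := by
  split_ifs with hz
  · subst hz
    unfold tilingWeight
    by_cases h : IsTiling w
    · rw [if_pos ((isTiling_cons_a_cons _ w).2 ⟨rfl, h⟩), if_pos h, prod_labelVal_cons,
        prod_labelVal_cons]
      simp only [labelVal, Fin.cons_zero, Fin.val_zero]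
      ring
    · rw [if_neg fun h' => h ((isTiling_cons_a_cons _ w).1 h').2, if_neg h, mul_zero]
  · exact if_neg fun h => hz ((isTiling_cons_a_cons z w).1 h).1

end Weights

theorem Label.sum_univ {M : Type*} [AddCommMonoid M] (f : Label → M) :
    ∑ x, f x = f .a + f .b + f .c := by
  rw [show (Finset.univ : Finset Label) = {.a, .b, .c} from rfl, Finset.sum_insert (by decide),
    Finset.sum_insert (by decide), Finset.sum_singleton, add_assoc]

theorem Fintype.sum_fin_succ_pi {α M : Type*} [Fintype α] [AddCommMonoid M] {m : ℕ}
    (F : (Fin (m + 1) → α) → M) :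
    ∑ t, F t = ∑ x, ∑ u : Fin m → α, F (Fin.cons x u) := by
  rw [← Fintype.sum_prod_type']
  exact (Fintype.sum_equiv (Fin.consEquiv fun _ => α) _ _ fun _ => rfl).symm

theorem D1_zero (A B C : ℕ → ℂ) : D1 0 A B C = 1 := by
  rw [D1_eq_sum_tilingWeight, Fintype.sum_unique, tilingWeight_fin_zero]

theorem D1_one (A B C : ℕ → ℂ) : D1 1 A B C = -B 1 := by
  simp [D1_eq_sum_tilingWeight, Fintype.sum_fin_succ_pi, Label.sum_univ,
    tilingWeight_cons_a_of_fin_zero, tilingWeight_cons_b, tilingWeight_cons_c,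
    tilingWeight_fin_zero]

theorem D1_add_two (n : ℕ) (A B C : ℕ → ℂ) :
    D1 (n + 2) A B C =
      -B 1 * D1 (n + 1) (fun k => A (k + 1)) (fun k => B (k + 1)) (fun k => C (k + 1)) -
        A 1 * C 2 * D1 n (fun k => A (k + 2)) (fun k => B (k + 2)) (fun k => C (k + 2)) := by
  have dimer : ∑ u : Fin (n + 1) → Label, tilingWeight A B C (Fin.cons .a u) =
      -(A 1 * C 2) * D1 n (fun k => A (k + 2)) (fun k => B (k + 2)) (fun k => C (k + 2)) := by
    simp [Fintype.sum_fin_succ_pi, tilingWeight_cons_a_cons,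
      D1_eq_sum_tilingWeight, Finset.mul_sum]
  rw [D1_eq_sum_tilingWeight, Fintype.sum_fin_succ_pi, Label.sum_univ, dimer]
  simp only [tilingWeight_cons_b, tilingWeight_cons_c, ← Finset.mul_sum, ← D1_eq_sum_tilingWeight,
    Finset.sum_const_zero, add_zero]
  ring

theorem det_tridiagEntry : ∀ (n : ℕ) (A B C : ℕ → ℂ),
    (of fun i j : Fin n => tridiagEntry C B A i j).det = (-1) ^ n * D1 n A B C
  | 0, A, B, C => by simp [D1_zero]
  | 1, A, B, C => by simp [tridiagEntry, D1_one]
  | n + 2, A, B, C => by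
    rw [det_of_tridiagonal_add_two _ fun a b => tridiagEntry_eq_zero C B A, D1_add_two]
    simp only [tridiagEntry_add, det_tridiagEntry]
    simp only [tridiagEntry, ↓reduceIte, zero_add, zero_ne_one, one_ne_zero, Nat.reduceAdd,
      OfNat.ofNat_ne_zero]
    ring

theorem triMatC_sub_smul (n : ℕ) (p q r l m nn : ℕ → ℝ) (lam : ℂ) :
    triMatC n l m nn - lam • triMatC n p q r =
      of fun i j : Fin n => tridiagEntry (fun k => (l k : ℂ) - lam * p k)
        (fun k => (m k : ℂ) - lam * q k) (fun k => (nn k : ℂ) - lam * r k) i j := by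
  ext i j
  simp only [Matrix.sub_apply, Matrix.smul_apply, triMatC, tridiagEntry, of_apply,
    smul_eq_mul]
  split_ifs <;> ring

theorem Complex.re_one_sub_div_one_add (μ : ℂ) :
    ((1 - μ) / (1 + μ)).re = (1 - ‖μ‖ ^ 2) / Complex.normSq (1 + μ) := by
  rw [Complex.div_re, ← add_div, Complex.sq_norm, Complex.normSq_apply]
  congr 1
  simp only [Complex.sub_re, Complex.one_re, Complex.add_re, Complex.sub_im, Complex.one_im,
    Complex.add_im, Complex.normSq_apply]
  ring

theorem Complex.norm_lt_one_of_re_one_sub_div_one_add_pos {μ : ℂ}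
    (h : 0 < ((1 - μ) / (1 + μ)).re) : ‖μ‖ < 1 := by
  rw [Complex.re_one_sub_div_one_add] at h
  have : 0 < 1 - ‖μ‖ ^ 2 := by
    by_contra! hle
    exact h.not_ge (div_nonpos_of_nonpos_of_nonneg hle (Complex.normSq_nonneg _))
  nlinarith [norm_nonneg μ]

namespace IsEig

variable {k : ℕ} {W : Matrix (Fin k) (Fin k) ℂ}

theorem smul {lam : ℂ} (h : IsEig W lam) (c : ℂ) : IsEig (c • W) (c * lam) := by
  obtain ⟨v, hv, hWv⟩ := h
  exact ⟨v, hv, by rw [smul_mulVec, hWv, smul_smul]⟩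

theorem det_sub_smul_eq_zero {X Y : Matrix (Fin k) (Fin k) ℂ} (hX : IsUnit X.det) {lam : ℂ}
    (h : IsEig (X⁻¹ * Y) lam) : (Y - lam • X).det = 0 := by
  obtain ⟨v, hv, hWv⟩ := h
  refine exists_mulVec_eq_zero_iff.mp ⟨v, hv, ?_⟩
  have hYv : Y *ᵥ v = lam • X *ᵥ v := by
    rw [← mul_nonsing_inv_cancel_left X Y hX, ← mulVec_mulVec, hWv,
      mulVec_smul]
  rw [sub_mulVec, hYv, smul_mulVec, sub_self]

theorem of_cayley (hP : IsUnit (1 + W).det) {μ : ℂ} (h : IsEig ((1 + W)⁻¹ * (1 - W)) μ) :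
    IsEig W ((1 - μ) / (1 + μ)) := by
  obtain ⟨v, hv, hSv⟩ := h
  have hQv : (1 - W) *ᵥ v = μ • (1 + W) *ᵥ v := by
    rw [← mul_nonsing_inv_cancel_left (1 + W) (1 - W) hP, ← mulVec_mulVec, hSv,
      mulVec_smul]
  have key : (1 + μ) • W *ᵥ v = (1 - μ) • v := by
    simp only [sub_mulVec, add_mulVec, one_mulVec] at hQv
    linear_combination (norm := module) -hQv
  have hμ : 1 + μ ≠ 0 := by
    rintro hμ
    have : (2 : ℂ) • v = 0 := by
      rw [show (2 : ℂ) = 1 - μ by linear_combination hμ, ← key, hμ, zero_smul]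
    exact hv (by simpa using this)
  refine ⟨v, hv, ?_⟩
  rw [div_eq_inv_mul, ← smul_smul, ← key, smul_smul, inv_mul_cancel₀ hμ, one_smul]

end IsEig

namespace Matrix

variable {k : ℕ} {W : Matrix (Fin k) (Fin k) ℂ}

theorem re_pos_of_isEig_ofReal_smul {c : ℝ} (hc : 0 < c) (hW : ∀ lam, IsEig W lam → 0 < lam.re)
    (lam : ℂ) (h : IsEig ((c : ℂ) • W) lam) : 0 < lam.re := by
  have hc' : (c : ℂ) ≠ 0 := Complex.ofReal_ne_zero.mpr hc.ne'
  have h' := h.smul (c : ℂ)⁻¹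
  rw [smul_smul, inv_mul_cancel₀ hc', one_smul] at h'
  have := hW _ h'
  rw [← Complex.ofReal_inv, Complex.re_ofReal_mul] at this
  exact pos_of_mul_pos_right this (inv_pos.mpr hc).le

theorem isUnit_det_one_add_of_re_pos (hW : ∀ lam, IsEig W lam → 0 < lam.re) :
    IsUnit (1 + W).det := by
  rw [isUnit_iff_ne_zero]
  intro hdet
  obtain ⟨v, hv, hker⟩ := exists_mulVec_eq_zero_iff.mpr hdet
  have hWv : W *ᵥ v = (-1 : ℂ) • v := by
    rw [add_mulVec, one_mulVec] at hker
    rw [neg_one_smul, eq_neg_iff_add_eq_zero, add_comm, hker]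
  exact absurd (hW (-1) ⟨v, hv, hWv⟩) (by norm_num)

theorem norm_lt_one_of_isEig_cayley (hW : ∀ lam, IsEig W lam → 0 < lam.re) {μ : ℂ}
    (h : IsEig ((1 + W)⁻¹ * (1 - W)) μ) : ‖μ‖ < 1 :=
  Complex.norm_lt_one_of_re_one_sub_div_one_add_pos
    (hW _ (h.of_cayley (isUnit_det_one_add_of_re_pos hW)))

end Matrix

theorem stmt4_general (N : ℕ) (p q r l m n : ℕ → ℝ)
    (hX : IsUnit (triMatC (N - 1) p q r).det)
    (hroot : ∀ lam : ℂ,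
      D1 (N - 1) (fun j => (n j : ℂ) - lam * (r j : ℂ))
        (fun j => (m j : ℂ) - lam * (q j : ℂ))
        (fun j => (l j : ℂ) - lam * (p j : ℂ)) = 0 → 0 < lam.re) :
    IsUnit (1 + (1 / 2 : ℂ) •
      ((triMatC (N - 1) p q r)⁻¹ * triMatC (N - 1) l m n)).det ∧
    ∀ μ : ℂ,
      IsEig ((1 + (1 / 2 : ℂ) • ((triMatC (N - 1) p q r)⁻¹ * triMatC (N - 1) l m n))⁻¹ *
        (1 - (1 / 2 : ℂ) • ((triMatC (N - 1) p q r)⁻¹ * triMatC (N - 1) l m n))) μ →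
      ‖μ‖ < 1 := by
  set W := (triMatC (N - 1) p q r)⁻¹ * triMatC (N - 1) l m n
  have hW : ∀ lam, IsEig W lam → 0 < lam.re := by
    intro lam h
    apply hroot lam
    have hdet := h.det_sub_smul_eq_zero hX
    rw [triMatC_sub_smul, det_tridiagEntry] at hdet
    exact (mul_eq_zero.mp hdet).resolve_left (pow_ne_zero _ (by norm_num))
  have hW_half : ∀ lam, IsEig ((1 / 2 : ℂ) • W) lam → 0 < lam.re := by
    simpa using re_pos_of_isEig_ofReal_smul (c := 1 / 2) (by norm_num) hW
  exact ⟨isUnit_det_one_add_of_re_pos hW_half, fun μ => norm_lt_one_of_isEig_cayley hW_half⟩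

/-- If `X` is invertible, every root of `D¹_N` has positive real part, and
`n_j - λ r_j ≠ 0` for every eigenvalue `λ` of `W = X⁻¹ Y` and every `j`, then
`I + (1/2) W` is invertible and every eigenvalue `μ` of
`(I + (1/2) W)⁻¹ (I - (1/2) W)` satisfies `|μ| < 1`
(the Crank–Nicolson compact scheme is stable). -/
theorem stmt4 (N : ℕ) (hN : 2 ≤ N) (p q r l m n : ℕ → ℝ)
    (hX : IsUnit (triMatC (N - 1) p q r).det)
    (hroot : ∀ lam : ℂ,
      D1 (N - 1) (fun j => (n j : ℂ) - lam * (r j : ℂ))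
        (fun j => (m j : ℂ) - lam * (q j : ℂ))
        (fun j => (l j : ℂ) - lam * (p j : ℂ)) = 0 → 0 < lam.re)
    (hA : ∀ lam : ℂ,
      IsEig ((triMatC (N - 1) p q r)⁻¹ * triMatC (N - 1) l m n) lam →
      ∀ j, 1 ≤ j → j ≤ N - 1 → (n j : ℂ) - lam * (r j : ℂ) ≠ 0) :
    IsUnit (1 + (1 / 2 : ℂ) •
      ((triMatC (N - 1) p q r)⁻¹ * triMatC (N - 1) l m n)).det ∧
    ∀ μ : ℂ,
      IsEig ((1 + (1 / 2 : ℂ) • ((triMatC (N - 1) p q r)⁻¹ * triMatC (N - 1) l m n))⁻¹ *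
        (1 - (1 / 2 : ℂ) • ((triMatC (N - 1) p q r)⁻¹ * triMatC (N - 1) l m n))) μ →
      ‖μ‖ < 1 :=
  stmt4_general N p q r l m n hX hroot
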